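/- arXiv:2109.01008 — 2 statements merged into one kernel-verified Lean document; each statement's English description precedes it below -/
import Mathlib

section
/- Let R be a p-torsion-free commutative ring and M a finite free R-module with F: N → M and V: M → N R-linear maps satisfying F∘V = p·id_M and V∘F = p·id_N (N finite free of the same rank). Writing M̄ = M/pM, N̄ = N/pN and F̄, V̄ for the reductions, the sequence N̄ →^{F̄} M̄ →^{V̄} N̄ →^{F̄} M̄ is exact, i.e. ker(V̄) = im(F̄) and ker(F̄) = im(V̄). -/
open Pointwise

/-
Since V ∘ F = p, the image of F̄ is killed by V̄. Conversely, if V m = p n then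
p • m = F (V m) = p • F n, and cancelling p (which is regular on the free module M over the
p-torsion-free ring R) gives m = F n. Exchanging the roles of F and V gives the second equality.
-/

namespace Submodule

variable {R M N : Type*} [CommRing R] [AddCommGroup M] [Module R M] [AddCommGroup N] [Module R N]

theorem range_mapQ_le_ker_mapQ_of_comp_eq_smul {r : R} (F : N →ₗ[R] M) (V : M →ₗ[R] N)
    (hVF : V ∘ₗ F = r • LinearMap.id) (hF : r • (⊤ : Submodule R N) ≤ comap F (r • ⊤))
    (hV : r • (⊤ : Submodule R M) ≤ comap V (r • ⊤)) :
    LinearMap.range (mapQ _ _ F hF) ≤ LinearMap.ker (mapQ _ _ V hV) := by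
  rintro _ ⟨y, rfl⟩
  obtain ⟨n, rfl⟩ := Quotient.mk_surjective _ y
  rw [LinearMap.mem_ker, mapQ_apply, mapQ_apply, Quotient.mk_eq_zero,
    ← LinearMap.comp_apply, hVF]
  exact smul_mem_pointwise_smul n r ⊤ trivial

theorem ker_mapQ_le_range_mapQ_of_comp_eq_smul {r : R} (hM : IsSMulRegular M r)
    (F : N →ₗ[R] M) (V : M →ₗ[R] N) (hFV : F ∘ₗ V = r • LinearMap.id)
    (hF : r • (⊤ : Submodule R N) ≤ comap F (r • ⊤))
    (hV : r • (⊤ : Submodule R M) ≤ comap V (r • ⊤)) :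
    LinearMap.ker (mapQ _ _ V hV) ≤ LinearMap.range (mapQ _ _ F hF) := by
  intro x hx
  obtain ⟨m, rfl⟩ := Quotient.mk_surjective _ x
  rw [LinearMap.mem_ker, mapQ_apply, Quotient.mk_eq_zero, mem_smul_pointwise_iff_exists] at hx
  obtain ⟨n, -, hn⟩ := hx
  have hm : m = F n := hM <| show r • m = r • F n by
    rw [← map_smul, hn, ← LinearMap.comp_apply, hFV, LinearMap.smul_apply, LinearMap.id_apply]
  exact ⟨Quotient.mk n, by rw [mapQ_apply, hm]⟩

theorem range_mapQ_eq_ker_mapQ_of_comp_eq_smul {r : R} (hM : IsSMulRegular M r)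
    (F : N →ₗ[R] M) (V : M →ₗ[R] N) (hFV : F ∘ₗ V = r • LinearMap.id)
    (hVF : V ∘ₗ F = r • LinearMap.id) (hF : r • (⊤ : Submodule R N) ≤ comap F (r • ⊤))
    (hV : r • (⊤ : Submodule R M) ≤ comap V (r • ⊤)) :
    LinearMap.range (mapQ _ _ F hF) = LinearMap.ker (mapQ _ _ V hV) :=
  (range_mapQ_le_ker_mapQ_of_comp_eq_smul F V hVF hF hV).antisymm
    (ker_mapQ_le_range_mapQ_of_comp_eq_smul hM F V hFV hF hV)

end Submodule

theorem stmt5_general (p : ℕ) (R : Type*) [CommRing R]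
    (hpnzd : ∀ x : R, (p : R) * x = 0 → x = 0)
    (M N : Type*) [AddCommGroup M] [Module R M] [AddCommGroup N] [Module R N]
    [Module.Free R M] [Module.Free R N]
    (F : N →ₗ[R] M) (V : M →ₗ[R] N)
    (hFV : F ∘ₗ V = (p : R) • LinearMap.id)
    (hVF : V ∘ₗ F = (p : R) • LinearMap.id)
    (hF : ((p : R) • (⊤ : Submodule R N)) ≤
      Submodule.comap F ((p : R) • (⊤ : Submodule R M)))
    (hV : ((p : R) • (⊤ : Submodule R M)) ≤
      Submodule.comap V ((p : R) • (⊤ : Submodule R N))) :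
    LinearMap.range (Submodule.mapQ ((p : R) • (⊤ : Submodule R N))
        ((p : R) • (⊤ : Submodule R M)) F hF) =
      LinearMap.ker (Submodule.mapQ ((p : R) • (⊤ : Submodule R M))
        ((p : R) • (⊤ : Submodule R N)) V hV) ∧
    LinearMap.range (Submodule.mapQ ((p : R) • (⊤ : Submodule R M))
        ((p : R) • (⊤ : Submodule R N)) V hV) =
      LinearMap.ker (Submodule.mapQ ((p : R) • (⊤ : Submodule R N))
        ((p : R) • (⊤ : Submodule R M)) F hF) := by
  have hp : (p : R) ∈ nonZeroDivisors R := mem_nonZeroDivisors_iff_left.mpr hpnzd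
  exact ⟨Submodule.range_mapQ_eq_ker_mapQ_of_comp_eq_smul
      (Module.Flat.isSMulRegular_of_nonZeroDivisors hp) F V hFV hVF hF hV,
    Submodule.range_mapQ_eq_ker_mapQ_of_comp_eq_smul
      (Module.Flat.isSMulRegular_of_nonZeroDivisors hp) V F hVF hFV hV hF⟩

/-- Let `R` be a `p`-torsion-free commutative ring, `M`, `N`
finite free `R`-modules of the same rank, and `F : N → M`, `V : M → N` linear
maps with `F ∘ V = p·id` and `V ∘ F = p·id`.  Then the reduced sequence
`N̄ → M̄ → N̄ → M̄` (with `M̄ = M/pM`, `N̄ = N/pN`) is exact: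
`ker V̄ = im F̄` and `ker F̄ = im V̄`. -/
theorem stmt5 (p : ℕ) (hp : p.Prime) (R : Type*) [CommRing R]
    (hpnzd : ∀ x : R, (p : R) * x = 0 → x = 0)
    (M N : Type*) [AddCommGroup M] [Module R M] [AddCommGroup N] [Module R N]
    [Module.Free R M] [Module.Finite R M] [Module.Free R N] [Module.Finite R N]
    (hrank : Module.finrank R N = Module.finrank R M)
    (F : N →ₗ[R] M) (V : M →ₗ[R] N)
    (hFV : F ∘ₗ V = (p : R) • LinearMap.id)
    (hVF : V ∘ₗ F = (p : R) • LinearMap.id)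
    (hF : ((p : R) • (⊤ : Submodule R N)) ≤
      Submodule.comap F ((p : R) • (⊤ : Submodule R M)))
    (hV : ((p : R) • (⊤ : Submodule R M)) ≤
      Submodule.comap V ((p : R) • (⊤ : Submodule R N))) :
    LinearMap.range (Submodule.mapQ ((p : R) • (⊤ : Submodule R N))
        ((p : R) • (⊤ : Submodule R M)) F hF) =
      LinearMap.ker (Submodule.mapQ ((p : R) • (⊤ : Submodule R M))
        ((p : R) • (⊤ : Submodule R N)) V hV) ∧
    LinearMap.range (Submodule.mapQ ((p : R) • (⊤ : Submodule R M))
        ((p : R) • (⊤ : Submodule R N)) V hV) =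
      LinearMap.ker (Submodule.mapQ ((p : R) • (⊤ : Submodule R N))
        ((p : R) • (⊤ : Submodule R M)) F hF) :=
  stmt5_general p R hpnzd M N F V hFV hVF hF hV
end

section
/- Let R be a p-torsion-free commutative ring and M a finite free R-module with F: M^σ → M and V: M → M^σ satisfying F∘V = p and V∘F = p, where M^σ is a finite free module of the same rank. Suppose M̄¹ is such that M̄^{1,σ} = ker(F̄: M̄^σ → M̄). Then for a submodule M¹ ⊆ M which is a direct summand lifting M̄¹ and a complement M⁰ (so M = M¹ ⊕ M⁰), one has F⁻¹(pM) = M^{1,σ} + pM^σ = M^{1,σ} ⊕ pM^{0,σ}; consequently the partially divided map Γ := (1/p)F|_{M^{1,σ}} ⊕ F|_{M^{0,σ}} is well-defined and surjective onto M. -/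
open Pointwise

lemma stmt14_mem_smul_iff {R M : Type*} [CommRing R] [AddCommGroup M] [Module R M]
    (a : R) (S : Submodule R M) (x : M) : x ∈ a • S ↔ ∃ y ∈ S, a • y = x := by
  constructor
  · intro hx
    have : x ∈ (↑(a • S) : Set M) := hx
    rw [Submodule.coe_pointwise_smul] at this
    obtain ⟨y, hy, rfl⟩ := this
    exact ⟨y, hy, rfl⟩
  · rintro ⟨y, hy, rfl⟩
    exact Submodule.smul_mem_pointwise_smul y a S hy

/-- Let `R` be a `p`-torsion-free commutative ring and
`F : N → M` (playing the roles of `F : M^σ → M`), `V : M → N` with `F∘V = p`,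
`V∘F = p`, where `M`, `N` are finite free of the same rank.  Suppose
`ker F̄ = M̄^{1,σ}`, i.e. `F n ∈ pM ↔ n ∈ N¹ + pN` for a direct summand `N¹`
with complement `N⁰`.  Then `F⁻¹(pM) = N¹ + pN = N¹ ⊕ pN⁰`, and the partially
divided map `Γ = (1/p)F|_{N¹} ⊕ F|_{N⁰}` is well-defined and surjective. -/
theorem stmt14 (p : ℕ) (hp : p.Prime) (R : Type*) [CommRing R]
    (hpnzd : ∀ x : R, (p : R) * x = 0 → x = 0)
    (M N : Type*) [AddCommGroup M] [Module R M] [AddCommGroup N] [Module R N]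
    [Module.Free R M] [Module.Finite R M] [Module.Free R N] [Module.Finite R N]
    (hrank : Module.finrank R N = Module.finrank R M)
    (F : N →ₗ[R] M) (V : M →ₗ[R] N)
    (hFV : F ∘ₗ V = (p : R) • LinearMap.id)
    (hVF : V ∘ₗ F = (p : R) • LinearMap.id)
    (N1 N0 : Submodule R N) (hcompl : IsCompl N1 N0)
    -- `M̄^{1,σ} = ker F̄`:
    (hker : ∀ n : N, F n ∈ (p : R) • (⊤ : Submodule R M) ↔
      n ∈ N1 ⊔ (p : R) • (⊤ : Submodule R N)) :
    -- `F⁻¹(pM) = N¹ + pN = N¹ ⊕ pN⁰`: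
    (Submodule.comap F ((p : R) • (⊤ : Submodule R M)) =
        N1 ⊔ (p : R) • (⊤ : Submodule R N) ∧
      N1 ⊔ (p : R) • (⊤ : Submodule R N) = N1 ⊔ (p : R) • N0 ∧
      Disjoint N1 ((p : R) • N0)) ∧
    -- the partially divided Frobenius is well-defined and surjective:
    (∃ Γ : N →ₗ[R] M,
      (∀ n ∈ N1, (p : R) • Γ n = F n) ∧
      (∀ n ∈ N0, Γ n = F n) ∧
      Function.Surjective Γ) := by
  classical
  -- M is p-torsion free
  have hMtf : ∀ m : M, (p : R) • m = 0 → m = 0 := by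
    intro m hm
    have b := Module.Free.chooseBasis R M
    apply b.repr.injective
    ext i
    have h1 : b.repr ((p : R) • m) = 0 := by rw [hm]; simp
    have h2 : (p : R) * b.repr m i = 0 := by
      have := congrArg (fun f => f i) h1
      simpa [Finsupp.smul_apply, smul_eq_mul] using this
    simpa using hpnzd _ h2
  have hMinj : ∀ a b : M, (p : R) • a = (p : R) • b → a = b := by
    intro a b hab
    have h : (p : R) • (a - b) = 0 := by rw [smul_sub, hab, sub_self]
    exact sub_eq_zero.mp (hMtf _ h)
  -- Part 1: the comap equality
  have eq1 : Submodule.comap F ((p : R) • (⊤ : Submodule R M)) =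
      N1 ⊔ (p : R) • (⊤ : Submodule R N) := by
    ext n
    simpa using hker n
  -- Part 2: `N1 ⊔ pN = N1 ⊔ pN0`
  have eq2 : N1 ⊔ (p : R) • (⊤ : Submodule R N) = N1 ⊔ (p : R) • N0 := by
    apply le_antisymm
    · refine sup_le le_sup_left ?_
      intro x hx
      rw [stmt14_mem_smul_iff] at hx
      obtain ⟨n, -, rfl⟩ := hx
      have hn : n ∈ N1 ⊔ N0 := by
        rw [hcompl.codisjoint.eq_top]; trivial
      obtain ⟨y, hy, z, hz, rfl⟩ := Submodule.mem_sup.mp hn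
      rw [smul_add]
      exact Submodule.add_mem _
        (Submodule.mem_sup_left (N1.smul_mem _ hy))
        (Submodule.mem_sup_right (Submodule.smul_mem_pointwise_smul z _ N0 hz))
    · refine sup_le le_sup_left ?_
      intro x hx
      rw [stmt14_mem_smul_iff] at hx
      obtain ⟨n, -, rfl⟩ := hx
      exact Submodule.mem_sup_right (Submodule.smul_mem_pointwise_smul n _ ⊤ trivial)
  -- disjointness
  have hdisj : Disjoint N1 ((p : R) • N0) := by
    rw [Submodule.disjoint_def]
    intro x hx1 hx0
    rw [stmt14_mem_smul_iff] at hx0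
    obtain ⟨n0, hn0, rfl⟩ := hx0
    have hx0' : (p : R) • n0 ∈ N0 := N0.smul_mem _ hn0
    exact (Submodule.disjoint_def.mp hcompl.disjoint) _ hx1 hx0'
  refine ⟨⟨eq1, eq2, hdisj⟩, ?_⟩
  -- construct Γ
  have hFN1 : ∀ n : N1, ∃ m : M, (p : R) • m = F (n : N) := by
    intro n
    have h1 : (n : N) ∈ N1 ⊔ (p : R) • (⊤ : Submodule R N) := Submodule.mem_sup_left n.2
    have h2 := (hker (n : N)).mpr h1
    rw [stmt14_mem_smul_iff] at h2
    obtain ⟨m, -, hm⟩ := h2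
    exact ⟨m, hm⟩
  let g : N1 → M := fun n => Classical.choose (hFN1 n)
  have hg : ∀ n : N1, (p : R) • g n = F (n : N) := fun n => Classical.choose_spec (hFN1 n)
  let Γ1 : N1 →ₗ[R] M :=
    { toFun := g
      map_add' := by
        intro x y
        apply hMinj
        rw [smul_add, hg, hg, hg]
        simp [map_add]
      map_smul' := by
        intro c x
        apply hMinj
        rw [hg]
        simp only [RingHom.id_apply]
        rw [smul_comm, hg]
        simp [map_smul] }
  let Γ0 : N0 →ₗ[R] M := F.domRestrict N0
  let Γ : N →ₗ[R] M := LinearMap.ofIsCompl hcompl Γ1 Γ0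
  have hΓ1 : ∀ n ∈ N1, (p : R) • Γ n = F n := by
    intro n hn
    have : Γ n = Γ1 ⟨n, hn⟩ := LinearMap.ofIsCompl_left_apply hcompl ⟨n, hn⟩
    rw [this]
    exact hg ⟨n, hn⟩
  have hΓ0 : ∀ n ∈ N0, Γ n = F n := by
    intro n hn
    exact LinearMap.ofIsCompl_right_apply hcompl ⟨n, hn⟩
  refine ⟨Γ, hΓ1, hΓ0, ?_⟩
  intro m
  have hVm : V m ∈ N1 ⊔ (p : R) • N0 := by
    rw [← eq2, ← hker]
    have : F (V m) = (p : R) • m := by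
      have := congrArg (fun f => f m) hFV
      simpa using this
    rw [this]
    exact Submodule.smul_mem_pointwise_smul m _ ⊤ trivial
  obtain ⟨n1, hn1, x, hx, hsum⟩ := Submodule.mem_sup.mp hVm
  rw [stmt14_mem_smul_iff] at hx
  obtain ⟨n0, hn0, rfl⟩ := hx
  refine ⟨n1 + n0, ?_⟩
  apply hMinj
  have hFVm : F (V m) = (p : R) • m := by
    have := congrArg (fun f => f m) hFV
    simpa using this
  calc (p : R) • Γ (n1 + n0) = (p : R) • Γ n1 + (p : R) • Γ n0 := by
        rw [map_add, smul_add]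
    _ = F n1 + (p : R) • F n0 := by rw [hΓ1 n1 hn1, hΓ0 n0 hn0]
    _ = F (n1 + (p : R) • n0) := by rw [map_add, map_smul]
    _ = F (V m) := by rw [hsum]
    _ = (p : R) • m := hFVm
end
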